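/- arXiv:2008.00761 — 4 statements merged into one kernel-verified Lean document; each statement's English description precedes it below -/
import Mathlib

section
/- For α ∈ (1/2, 1) and s ≥ 1, the function ρ_α(s) = (s+1)^{2α} + (s-1)^{2α} - 2 s^{2α} is strictly positive. -/
/-- Midpoint form of the strict convexity of `x ↦ x ^ p` on `[0, ∞)` for `p > 1`. -/
theorem two_mul_rpow_lt_rpow_add_add_rpow_sub {p s h : ℝ} (hp : 1 < p) (hh : 0 < h)
    (hhs : h ≤ s) : 2 * s ^ p < (s + h) ^ p + (s - h) ^ p := by
  have hmid := (strictConvexOn_rpow hp).2 (Set.mem_Ici.2 (sub_nonneg.2 hhs))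
    (Set.mem_Ici.2 (by linarith : (0 : ℝ) ≤ s + h)) (by linarith : s - h ≠ s + h)
    (by norm_num : (0 : ℝ) < 1 / 2) (by norm_num : (0 : ℝ) < 1 / 2) (by norm_num)
  have hs : (1 / 2 : ℝ) • (s - h) + (1 / 2 : ℝ) • (s + h) = s := by
    simp only [smul_eq_mul]; ring
  rw [hs, smul_eq_mul, smul_eq_mul] at hmid
  linarith

theorem stmt_1 (α s : ℝ) (hα : 1/2 < α ∧ α < 1) (hs : 1 ≤ s) :
    0 < (s + 1) ^ (2*α) + (s - 1) ^ (2*α) - 2 * s ^ (2*α) := by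
  have hp : 1 < 2 * α := by linarith [hα.1]
  linarith [two_mul_rpow_lt_rpow_add_add_rpow_sub hp one_pos hs]
end

section
/- For α ∈ (0,1) and r > 1, ∫_{-r}^{r} ρ_α(v) (1 - |v|/r) dv = (1/(r(2α+1)(α+1))) ((r+1)^{2α+2} + (r-1)^{2α+2} - 2 r^{2α+2} - 2), where ρ_α(v) = |v+1|^{2α} + |v-1|^{2α} - 2|v|^{2α}. -/
/-!
Write ρ_b = Δ|·|^b for the second difference Δφ(v) = φ(v+1) + φ(v-1) - 2φ(v) (`secondDiff`),
which commutes with differentiation.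
The integrand is even, so the integral is twice the one over [0, r], where the weight is
1 - v/r. Since x|x|^b/(b+1) and |x|^(b+2)/((b+1)(b+2)) are successive primitives of |x|^b,
G = Δ(x|x|^b)/(b+1) is a primitive of ρ_b and H = Δ|x|^(b+2)/((b+1)(b+2)) one of G; then
G(v)(1 - v/r) + H(v)/r is a primitive of ρ_b(v)(1 - v/r), and G(0) = 0 by oddness.
-/

open Real Set intervalIntegral

def secondDiff (φ : ℝ → ℝ) (v : ℝ) : ℝ := φ (v + 1) + φ (v - 1) - 2 * φ v

lemma secondDiff_div_const (φ : ℝ → ℝ) (c v : ℝ) :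
    secondDiff (fun x => φ x / c) v = secondDiff φ v / c := by
  simp only [secondDiff]
  ring

lemma secondDiff_neg {φ : ℝ → ℝ} (hφ : ∀ x, φ (-x) = φ x) (v : ℝ) :
    secondDiff φ (-v) = secondDiff φ v := by
  simp only [secondDiff, show -v + 1 = -(v - 1) by ring, show -v - 1 = -(v + 1) by ring, hφ]
  ring

lemma Continuous.secondDiff {φ : ℝ → ℝ} (hφ : Continuous φ) :
    Continuous (secondDiff φ) := by
  unfold _root_.secondDiff
  fun_prop

lemma hasDerivAt_secondDiff {φ φ' : ℝ → ℝ} (h : ∀ x, HasDerivAt φ (φ' x) x) (v : ℝ) :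
    HasDerivAt (secondDiff φ) (secondDiff φ' v) v := by
  have h₁ := (h (v + 1)).comp_add_const v 1
  have h₂ := (h (v - 1)).comp_sub_const v 1
  exact (h₁.add h₂).sub ((h v).const_mul 2)

lemma secondDiff_abs_rpow_zero {p : ℝ} (hp : p ≠ 0) : secondDiff (fun x => |x| ^ p) 0 = 2 := by
  norm_num [secondDiff, zero_rpow hp]

lemma secondDiff_mul_abs_rpow_zero (q : ℝ) : secondDiff (fun x => x * |x| ^ q) 0 = 0 := by
  simp [secondDiff]

lemma hasDerivAt_mul_abs_rpow {q : ℝ} (hq : 0 ≤ q) (x : ℝ) :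
    HasDerivAt (fun x => x * |x| ^ q) ((q + 1) * |x| ^ q) x := by
  have hpow (y : ℝ) : HasDerivAt (fun y => y ^ (q + 1)) ((q + 1) * y ^ q) y := by
    simpa using Real.hasDerivAt_rpow_const (x := y) (p := q + 1) (Or.inr (by linarith))
  have hpos (y : ℝ) (hy : 0 ≤ y) : y * |y| ^ q = y ^ (q + 1) := by
    rw [abs_of_nonneg hy, rpow_add_one' hy (by linarith), mul_comm]
  have hIci : 0 ≤ x →
      HasDerivWithinAt (fun x => x * |x| ^ q) ((q + 1) * |x| ^ q) (Ici 0) x := by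
    intro hx
    rw [abs_of_nonneg hx]
    exact (hpow x).hasDerivWithinAt.congr_of_mem (fun y hy => hpos y hy) hx
  have hIic : x ≤ 0 →
      HasDerivWithinAt (fun x => x * |x| ^ q) ((q + 1) * |x| ^ q) (Iic 0) x := by
    intro hx
    have h := ((hpow (-x)).comp x (hasDerivAt_neg x)).fun_neg
    rw [abs_of_nonpos hx]
    refine (h.hasDerivWithinAt.congr_of_mem (fun y hy => ?_) hx).congr_deriv (by ring)
    have := hpos (-y) (neg_nonneg.2 hy)
    simp only [Function.comp_apply, abs_neg] at this ⊢
    linarith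
  rcases lt_trichotomy x 0 with hx | rfl | hx
  · exact (hIic hx.le).hasDerivAt (Iic_mem_nhds hx)
  · simpa [Iic_union_Ici] using (hIic le_rfl).union (hIci le_rfl)
  · exact (hIci hx.le).hasDerivAt (Ici_mem_nhds hx)

lemma integral_neg_eq_two_mul_of_even {f : ℝ → ℝ} (hf : ∀ x, f (-x) = f x)
    (hint : ∀ a b, IntervalIntegrable f MeasureTheory.volume a b) (r : ℝ) :
    ∫ v in (-r)..r, f v = 2 * ∫ v in 0..r, f v := by
  rw [← integral_add_adjacent_intervals (hint _ _) (hint _ _), two_mul]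
  congr 1
  simpa [hf] using (integral_comp_neg (a := 0) (b := r) f).symm

lemma integral_mul_one_sub_div {g G H : ℝ → ℝ} {r : ℝ} (hr : r ≠ 0)
    (hG : ∀ x, HasDerivAt G (g x) x) (hH : ∀ x, HasDerivAt H (G x) x)
    (hg : IntervalIntegrable g MeasureTheory.volume 0 r) :
    ∫ v in 0..r, g v * (1 - v / r) = (H r - H 0) / r - G 0 := by
  have hF (x : ℝ) : HasDerivAt (fun v => G v * (1 - v / r) + H v / r) (g x * (1 - x / r)) x :=
    ((hG x).fun_mul (((hasDerivAt_id' x).div_const r).const_sub 1)).fun_add ((hH x).div_const r)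
      |>.congr_deriv (by ring)
  rw [integral_eq_sub_of_hasDerivAt (fun x _ => hF x) (hg.mul_continuousOn (by fun_prop))]
  field_simp
  ring

theorem integral_secondDiff_abs_rpow_mul_one_sub_abs_div {b r : ℝ} (hb : 0 ≤ b) (hr : 0 < r) :
    ∫ v in (-r)..r, secondDiff (fun x => |x| ^ b) v * (1 - |v| / r) =
      2 / (r * (b + 1) * (b + 2)) * (secondDiff (fun x => |x| ^ (b + 2)) r - 2) := by
  have hb₁ : b + 1 ≠ 0 := by linarith
  have hb₂ : b + 2 ≠ 0 := by linarith
  have hcont : Continuous (secondDiff fun x => |x| ^ b) :=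
    (continuous_abs.rpow_const fun _ => Or.inr hb).secondDiff
  have hG (x : ℝ) : HasDerivAt (fun x => x * |x| ^ b / (b + 1)) (|x| ^ b) x :=
    (hasDerivAt_mul_abs_rpow hb x).div_const _ |>.congr_deriv (by field_simp)
  have hH (x : ℝ) :
      HasDerivAt (fun x => |x| ^ (b + 2) / ((b + 1) * (b + 2))) (x * |x| ^ b / (b + 1)) x :=
    (hasDerivAt_abs_rpow x (by linarith)).div_const _ |>.congr_deriv (by
      rw [add_sub_cancel_right]; field_simp)
  have heven (v : ℝ) : secondDiff (fun x => |x| ^ b) (-v) * (1 - |-v| / r) =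
      secondDiff (fun x => |x| ^ b) v * (1 - |v| / r) := by
    rw [abs_neg, secondDiff_neg fun x => by rw [abs_neg]]
  rw [integral_neg_eq_two_mul_of_even heven
    fun _ _ => (hcont.fun_mul (by fun_prop)).intervalIntegrable _ _]
  rw [integral_congr (g := fun v => secondDiff (fun x => |x| ^ b) v * (1 - v / r)) fun v hv => by
    rw [abs_of_nonneg (by simpa [hr.le] using hv.1)]]
  rw [integral_mul_one_sub_div hr.ne' (hasDerivAt_secondDiff hG) (hasDerivAt_secondDiff hH)
    (hcont.intervalIntegrable _ _)]
  simp only [secondDiff_div_const, secondDiff_abs_rpow_zero hb₂, secondDiff_mul_abs_rpow_zero]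
  field_simp
  ring

theorem stmt_5 (α r : ℝ) (hα : 0 < α ∧ α < 1) (hr : 1 < r) :
    (∫ v in (-r)..r,
        (|v + 1| ^ (2*α) + |v - 1| ^ (2*α) - 2 * |v| ^ (2*α)) * (1 - |v| / r)) =
      (1 / (r * (2*α + 1) * (α + 1))) *
        ((r + 1) ^ (2*α + 2) + (r - 1) ^ (2*α + 2) - 2 * r ^ (2*α + 2) - 2) := by
  have h := integral_secondDiff_abs_rpow_mul_one_sub_abs_div (b := 2 * α)
    (by linarith) (by linarith : 0 < r)
  simp only [secondDiff] at h
  rw [h, abs_of_pos (by linarith : 0 < r + 1), abs_of_pos (by linarith : 0 < r - 1),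
    abs_of_pos (by linarith : 0 < r)]
  field_simp
end

section
/- Let η ∈ (0,1) and C : [0,∞) → ℝ be measurable, bounded, with C(t) · t^η → 1 as t → ∞. Then, as n → ∞, ∫_0^{2n} (2n - t) C(t) dt is asymptotically equivalent to 2^{2-η} B(2, 1-η) n^{2-η}, where B denotes the Beta function. -/
/-!
Substituting `t = 2n s` turns the integral into `(2n)² ∫₀¹ (1 - s) C(2n s) ds`. Since `C` is
bounded and `C(t) t^η → 1`, the function `|C(t)| t^η` is bounded on `(0, ∞)`, so after multiplying
by `(2n)^η` the integrand `(1 - s) (2n)^η C(2n s)` is dominated by a multiple of `(1 - s) s^(-η)`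
and tends to `(1 - s) s^(-η)` pointwise. Dominated convergence gives the limit
`∫₀¹ (1 - s) s^(-η) ds = B(1 - η, 2) = B(2, 1 - η)`, which is positive.
-/

open Filter MeasureTheory Topology

lemma exists_abs_mul_rpow_le_of_tendsto {η : ℝ} (hη : 0 ≤ η) {C : ℝ → ℝ} {M : ℝ}
    (hCbdd : ∀ t, |C t| ≤ M) {L : ℝ} (hC : Tendsto (fun t => C t * t ^ η) atTop (𝓝 L)) :
    ∃ K, ∀ t, 0 < t → |C t| * t ^ η ≤ K := by
  obtain ⟨T, hT⟩ := eventually_atTop.mp (hC.eventually (Metric.closedBall_mem_nhds L one_pos))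
  refine ⟨max (|L| + 1) (M * T ^ η), fun t ht => ?_⟩
  rcases le_or_gt T t with hTt | htT
  · have hdist : |C t * t ^ η - L| ≤ 1 := hT t hTt
    rw [← abs_of_nonneg (Real.rpow_nonneg ht.le η), ← abs_mul]
    exact le_max_of_le_left (by linarith [abs_sub_abs_le_abs_sub (C t * t ^ η) L])
  · exact le_max_of_le_right <| mul_le_mul (hCbdd t) (Real.rpow_le_rpow ht.le htT.le hη)
      (Real.rpow_nonneg ht.le η) ((abs_nonneg _).trans (hCbdd t))

lemma integral_sub_mul_eq_sq_mul_integral (f : ℝ → ℝ) (a : ℝ) :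
    ∫ t in (0:ℝ)..a, (a - t) * f t = a ^ 2 * ∫ s in (0:ℝ)..1, (1 - s) * f (a * s) := by
  rcases eq_or_ne a 0 with rfl | ha
  · simp
  have h := intervalIntegral.integral_comp_mul_left (fun t => (a - t) * f t) (a := 0) (b := 1) ha
  simp only [mul_zero, mul_one, smul_eq_mul] at h
  rw [eq_inv_mul_iff_mul_eq₀ ha] at h
  rw [← h, ← intervalIntegral.integral_const_mul, ← intervalIntegral.integral_const_mul]
  congr 1
  ext s
  ring

lemma integral_mul_one_sub_rpow_eq (η : ℝ) :
    ∫ s in (0:ℝ)..1, s * (1 - s) ^ (-η) = ∫ s in (0:ℝ)..1, (1 - s) * s ^ (-η) := by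
  simpa using
    intervalIntegral.integral_comp_sub_left (fun s : ℝ => (1 - s) * s ^ (-η)) (a := 0) (b := 1) 1

lemma intervalIntegrable_one_sub_mul_rpow {η : ℝ} (hη : η < 1) :
    IntervalIntegrable (fun s : ℝ => (1 - s) * s ^ (-η)) volume 0 1 :=
  (intervalIntegral.intervalIntegrable_rpow' (by linarith)).continuousOn_mul (by fun_prop)

lemma integral_one_sub_mul_rpow_pos {η : ℝ} (hη : η < 1) :
    0 < ∫ s in (0:ℝ)..1, (1 - s) * s ^ (-η) :=
  intervalIntegral.intervalIntegral_pos_of_pos_on (intervalIntegrable_one_sub_mul_rpow hη)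
    (fun s hs => mul_pos (by linarith [hs.2]) (Real.rpow_pos_of_pos hs.1 _)) one_pos

lemma rpow_mul_apply_mul_eq {η a s : ℝ} (ha : 0 < a) (hs : 0 < s) (C : ℝ → ℝ) :
    a ^ η * C (a * s) = C (a * s) * (a * s) ^ η * s ^ (-η) := by
  rw [Real.mul_rpow ha.le hs.le, Real.rpow_neg hs.le]
  field_simp [(Real.rpow_pos_of_pos hs η).ne']

lemma tendsto_rpow_mul_integral_one_sub_mul {η : ℝ} (hη : η < 1) {C : ℝ → ℝ}
    (hCmeas : Measurable C) {K L : ℝ} (hK : ∀ t, 0 < t → |C t| * t ^ η ≤ K)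
    (hC : Tendsto (fun t => C t * t ^ η) atTop (𝓝 L)) :
    Tendsto (fun a => a ^ η * ∫ s in (0:ℝ)..1, (1 - s) * C (a * s)) atTop
      (𝓝 (L * ∫ s in (0:ℝ)..1, (1 - s) * s ^ (-η))) := by
  simp only [← intervalIntegral.integral_const_mul]
  refine intervalIntegral.tendsto_integral_filter_of_dominated_convergence
    (fun s => K * ((1 - s) * s ^ (-η))) (.of_forall fun a => by fun_prop) ?_
    ((intervalIntegrable_one_sub_mul_rpow hη).const_mul K) (.of_forall fun s hs => ?_)
  · filter_upwards [eventually_gt_atTop 0] with a ha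
    refine .of_forall fun s hs => ?_
    rw [Set.uIoc_of_le zero_le_one] at hs
    have hs' : 0 ≤ 1 - s := by linarith [hs.2]
    calc ‖a ^ η * ((1 - s) * C (a * s))‖
          = (1 - s) * (|C (a * s)| * (a * s) ^ η * s ^ (-η)) := by
          rw [mul_left_comm (a ^ η), rpow_mul_apply_mul_eq ha hs.1, Real.norm_eq_abs,
            abs_mul, abs_mul, abs_mul, abs_of_nonneg hs',
            abs_of_nonneg (Real.rpow_nonneg hs.1.le _),
            abs_of_nonneg (Real.rpow_nonneg (mul_pos ha hs.1).le _)]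
      _ ≤ (1 - s) * (K * s ^ (-η)) :=
          mul_le_mul_of_nonneg_left (mul_le_mul_of_nonneg_right (hK _ (mul_pos ha hs.1))
            (Real.rpow_nonneg hs.1.le _)) hs'
      _ = K * ((1 - s) * s ^ (-η)) := by ring
  · rw [Set.uIoc_of_le zero_le_one] at hs
    have hlim : Tendsto (fun a => C (a * s) * (a * s) ^ η) atTop (𝓝 L) :=
      hC.comp (tendsto_id.atTop_mul_const hs.1)
    refine (hlim.mul_const ((1 - s) * s ^ (-η))).congr' ?_
    filter_upwards [eventually_gt_atTop 0] with a ha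
    rw [mul_left_comm (a ^ η), rpow_mul_apply_mul_eq ha hs.1]
    ring

theorem stmt_14 (η : ℝ) (hη : 0 < η ∧ η < 1) (C : ℝ → ℝ) (hCmeas : Measurable C)
    (M : ℝ) (hCbdd : ∀ t, |C t| ≤ M)
    (hC : Tendsto (fun t : ℝ => C t * t ^ η) atTop (nhds 1)) :
    Tendsto (fun n : ℝ =>
        (∫ t in (0:ℝ)..(2*n), (2*n - t) * C t) /
          (2 ^ (2 - η) * (∫ s in (0:ℝ)..1, s * (1 - s) ^ (-η)) * n ^ (2 - η)))
      atTop (nhds 1) := by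
  obtain ⟨hη0, hη1⟩ := hη
  obtain ⟨K, hK⟩ := exists_abs_mul_rpow_le_of_tendsto hη0.le hCbdd hC
  rw [integral_mul_one_sub_rpow_eq]
  set B := ∫ s in (0:ℝ)..1, (1 - s) * s ^ (-η)
  have hB : B ≠ 0 := (integral_one_sub_mul_rpow_pos hη1).ne'
  have hlim := ((tendsto_rpow_mul_integral_one_sub_mul hη1 hCmeas hK hC).comp
    (tendsto_id.const_mul_atTop two_pos)).div_const B
  rw [one_mul, div_self hB] at hlim
  refine hlim.congr' ?_
  filter_upwards [eventually_gt_atTop 0] with n hn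
  have hpow : (2 : ℝ) ^ (2 - η) * n ^ (2 - η) * (2 * n) ^ η = (2 * n) ^ 2 := by
    rw [← Real.mul_rpow zero_le_two hn.le, ← Real.rpow_add (by positivity), sub_add_cancel,
      Real.rpow_two]
  simp only [Function.comp_apply, id, integral_sub_mul_eq_sq_mul_integral _ (2 * n), ← hpow]
  field_simp
end

section
/- Let f : ℝ → ℝ satisfy f(x) < u for all x < 0 and f(x) ≥ u for all x > u* for some u* > 0. Then for every σ ≥ σ₀ > 0, the coefficient a₁(σ) = ∫_ℝ 1{f(σ x) ≥ u} x φ(x) dx satisfies a₁(σ) ≥ φ(u*/σ₀) > 0, where φ is the standard normal density. -/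
/-!
On `{x > u*/σ}` the indicator `1{f(σx) ≥ u}` is `1`, and on `{x < 0}` it is `0`, so `a₁(σ)` is an
integral of `x φ(x)` over a set squeezed between `(u*/σ, ∞)` and `[0, ∞)`. As `x φ(x) ≥ 0` on
`[0, ∞)`, it is at least `∫_{u*/σ}^∞ x φ(x) dx = φ(u*/σ)`, and `φ(u*/σ) ≥ φ(u*/σ₀)` because
`0 ≤ u*/σ ≤ u*/σ₀`.
-/

open MeasureTheory Real Set Filter

lemma integrable_mul_exp_neg_sq_div_two :
    Integrable fun x : ℝ => x * exp (-x ^ 2 / 2) := by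
  refine (integrable_mul_exp_neg_mul_sq (b := 1 / 2) (by norm_num)).congr
    (ae_of_all _ fun x => ?_)
  ring_nf

lemma integral_Ioi_mul_exp_neg_sq_div_two (a : ℝ) :
    ∫ x in Ioi a, x * exp (-x ^ 2 / 2) = exp (-a ^ 2 / 2) := by
  have hderiv : ∀ x ∈ Ioi a,
      HasDerivAt (fun y : ℝ => -exp (-y ^ 2 / 2)) (x * exp (-x ^ 2 / 2)) x := by
    intro x _
    have hinner : HasDerivAt (fun y : ℝ => -y ^ 2 / 2) (-x) x :=
      ((hasDerivAt_pow 2 x).fun_neg.div_const 2).congr_deriv (by norm_num; ring)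
    exact hinner.exp.fun_neg.congr_deriv (by ring)
  have hlim : Tendsto (fun y : ℝ => -exp (-y ^ 2 / 2)) atTop (nhds 0) := by
    rw [← neg_zero]
    refine (tendsto_exp_atBot.comp ?_).neg
    exact (tendsto_neg_atTop_atBot.comp (tendsto_pow_atTop two_ne_zero)).atBot_div_const two_pos
  rw [integral_Ioi_of_hasDerivAt_of_tendsto (by fun_prop) hderiv
    integrable_mul_exp_neg_sq_div_two.integrableOn hlim]
  ring

lemma exp_neg_sq_div_two_le_setIntegral_mul_exp {S : Set ℝ} (hS : MeasurableSet S) {a : ℝ}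
    (hIoi : Ioi a ⊆ S) (hnonneg : S ⊆ Ici 0) :
    exp (-a ^ 2 / 2) ≤ ∫ x in S, x * exp (-x ^ 2 / 2) := by
  rw [← integral_Ioi_mul_exp_neg_sq_div_two a]
  refine setIntegral_mono_set integrable_mul_exp_neg_sq_div_two.integrableOn ?_
    (Eventually.of_forall hIoi)
  filter_upwards [ae_restrict_mem hS] with x hx
  exact mul_nonneg (hnonneg hx) (exp_pos _).le

theorem stmt_18 (f : ℝ → ℝ) (hf : Measurable f) (u ustar σ σ₀ : ℝ)
    (h1 : ∀ x < 0, f x < u) (hustar : 0 < ustar) (h2 : ∀ x > ustar, u ≤ f x)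
    (hσ₀ : 0 < σ₀) (hσ : σ₀ ≤ σ) :
    (∫ x : ℝ, (if u ≤ f (σ * x) then (1:ℝ) else 0) * x *
        ((Real.sqrt (2 * Real.pi))⁻¹ * Real.exp (- x ^ 2 / 2))) ≥
      (Real.sqrt (2 * Real.pi))⁻¹ * Real.exp (- (ustar / σ₀) ^ 2 / 2) ∧
    0 < (Real.sqrt (2 * Real.pi))⁻¹ * Real.exp (- (ustar / σ₀) ^ 2 / 2) := by
  have hσpos : 0 < σ := hσ₀.trans_le hσ
  set S : Set ℝ := {x | u ≤ f (σ * x)}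
  have hS : MeasurableSet S :=
    measurableSet_le measurable_const (hf.comp (measurable_const_mul σ))
  have hIoi : Ioi (ustar / σ) ⊆ S := fun x hx =>
    h2 _ (by rwa [mem_Ioi, div_lt_iff₀' hσpos] at hx)
  have hnonneg : S ⊆ Ici 0 := fun x hx =>
    not_lt.1 fun hx0 => (h1 _ (mul_neg_of_pos_of_neg hσpos hx0)).not_ge hx
  have hrewrite : ∀ x, (if u ≤ f (σ * x) then (1:ℝ) else 0) * x *
      ((sqrt (2 * π))⁻¹ * exp (-x ^ 2 / 2)) =
      (sqrt (2 * π))⁻¹ * S.indicator (fun x => x * exp (-x ^ 2 / 2)) x := by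
    intro x
    by_cases hx : u ≤ f (σ * x)
    · rw [if_pos hx, indicator_of_mem (show x ∈ S from hx)]
      ring
    · rw [if_neg hx, indicator_of_notMem (show x ∉ S from hx)]
      ring
  have hmono : exp (-(ustar / σ₀) ^ 2 / 2) ≤ exp (-(ustar / σ) ^ 2 / 2) := by
    have hle : ustar / σ ≤ ustar / σ₀ := div_le_div_of_nonneg_left hustar.le hσ₀ hσ
    have hnonneg' : 0 ≤ ustar / σ := by positivity
    gcongr
  refine ⟨?_, by positivity⟩
  simp_rw [hrewrite, integral_const_mul, integral_indicator hS]
  gcongr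
  exact hmono.trans (exp_neg_sq_div_two_le_setIntegral_mul_exp hS hIoi hnonneg)
end
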